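/- Let X be a real infinite-dimensional Banach space with a Schauder basis (x_n)_{n=1}^∞ with basis constant K. Then bc₃((x_n)) ≤ 2K²·wk_X(B_X). -/

import Mathlib

open Filter Metric NormedSpace Set Topology

noncomputable section

variable {E : Type*} [NormedAddCommGroup E] [NormedSpace ℝ E]

/-- `f` is the sequence of coordinate functionals of the Schauder basis `x`:
every vector has an expansion along `x`, and such expansions are unique. -/
structure IsSchauderBasis (x : ℕ → E) (f : ℕ → E →L[ℝ] ℝ) : Prop where
  expand : ∀ v : E,
    Tendsto (fun n => ∑ i ∈ Finset.range n, f i v • x i) atTop (𝓝 v)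
  unique : ∀ (a : ℕ → ℝ) (v : E),
    Tendsto (fun n => ∑ i ∈ Finset.range n, a i • x i) atTop (𝓝 v) → ∀ i, a i = f i v

/-- the `n`-th basis projection `P_n`. -/
def basisProj (x : ℕ → E) (f : ℕ → E →L[ℝ] ℝ) (n : ℕ) : E →L[ℝ] E :=
  ∑ i ∈ Finset.range n, (f i).smulRight (x i)

/-- closed linear span of `{y i : i ≥ n}`. -/
def tailSpan (y : ℕ → E) (n : ℕ) : Submodule ℝ E :=
  (Submodule.span ℝ (y '' {i | n ≤ i})).topologicalClosure

/-- `‖g‖_n` : the norm of the restriction of `g` to the closed span of the tail of `y`. -/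
def tailNorm (y : ℕ → E) (g : E →L[ℝ] ℝ) (n : ℕ) : ℝ :=
  ‖g.comp (tailSpan y n).subtypeL‖

/-- the quantity `sh` measuring how far a basic sequence is from being shrinking. -/
def sh (y : ℕ → E) : ℝ :=
  sSup ((fun g : E →L[ℝ] ℝ => limsup (tailNorm y g) atTop) '' {g | ‖g‖ ≤ 1})

/-- non-symmetrised Hausdorff distance `d̂(A,B)`. -/
def hdist (A B : Set E) : ℝ := sSup ((fun a => infDist a B) '' A)

/-- ordinary distance between two sets. -/
def setDist (A B : Set E) : ℝ := sInf {d : ℝ | ∃ a ∈ A, ∃ b ∈ B, d = dist a b}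

/-- `ca` measures how far a sequence is from being norm-Cauchy. -/
def ca (z : ℕ → E) : ℝ :=
  ⨅ n : ℕ, sSup {d : ℝ | ∃ k, n ≤ k ∧ ∃ l, n ≤ l ∧ d = ‖z k - z l‖}

/-- measure of non-separability. -/
def sep (A : Set E) : ℝ :=
  sInf {ε : ℝ | 0 < ε ∧ ∃ C : Set E, C.Countable ∧ ∀ a ∈ A, ∃ c ∈ C, ‖a - c‖ ≤ ε}

/-- `V`: the closed linear span of the coordinate functionals. -/
def dualSpan (g : ℕ → E →L[ℝ] ℝ) : Submodule ℝ (StrongDual ℝ E) :=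
  (Submodule.span ℝ (Set.range g)).topologicalClosure

lemma mem_dualSpan (g : ℕ → E →L[ℝ] ℝ) (i : ℕ) : g i ∈ dualSpan g :=
  Submodule.le_topologicalClosure _ (Submodule.subset_span ⟨i, rfl⟩)

/-- the quantity `bc₁` measuring non-bounded-completeness. -/
def bc1 (y : ℕ → E) : ℝ :=
  sSup {c : ℝ | ∃ a : ℕ → ℝ,
    (∀ n, ‖∑ i ∈ Finset.range n, a i • y i‖ ≤ 1) ∧
    c = ca (fun n => ∑ i ∈ Finset.range n, a i • y i)}

/-- the quantity `bc₂`. -/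
def bc2 (y : ℕ → E) (g : ℕ → E →L[ℝ] ℝ) : ℝ :=
  sSup {c : ℝ | ∃ φ : ↥(dualSpan g) →L[ℝ] ℝ, @norm _ (@ContinuousLinearMap.hasOpNorm ℝ ℝ ↥(dualSpan g) ℝ _ _ _ _ _ _ _) φ ≤ 1 ∧
    c = ca (fun n => ∑ i ∈ Finset.range n, φ ⟨g i, mem_dualSpan g i⟩ • y i)}

/-- the quantity `bc₃`. -/
def bc3 (y : ℕ → E) (g : ℕ → E →L[ℝ] ℝ) : ℝ :=
  sSup {c : ℝ | ∃ Φ : StrongDual ℝ (StrongDual ℝ E), ‖Φ‖ ≤ 1 ∧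
    c = ca (fun n => ∑ i ∈ Finset.range n, Φ (g i) • y i)}

/-- `α_Y(X)`: measures how well `Y` embeds isomorphically into `X`. -/
def alpha (Y X : Type*) [NormedAddCommGroup Y] [NormedSpace ℝ Y]
    [NormedAddCommGroup X] [NormedSpace ℝ X] : ℝ :=
  sSup {c : ℝ | ∃ T : Y →L[ℝ] X, ‖T‖ ≤ 1 ∧ ∀ y : Y, c * ‖y‖ ≤ ‖T y‖}

/-- `β_Y(X)`: measures how well `Y` embeds complementably into `X`. -/
def beta (Y X : Type*) [NormedAddCommGroup Y] [NormedSpace ℝ Y]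
    [NormedAddCommGroup X] [NormedSpace ℝ X] : ℝ :=
  sSup {c : ℝ | ∃ (A : X →L[ℝ] Y) (B : Y →L[ℝ] X),
    A.comp B = ContinuousLinearMap.id ℝ Y ∧ c * (‖A‖ * ‖B‖) ≤ 1}

/-- weak-star closure of a subset of the bidual. -/
def wstarClosure {X : Type*} [NormedAddCommGroup X] [NormedSpace ℝ X]
    (S : Set (StrongDual ℝ (StrongDual ℝ X))) : Set (StrongDual ℝ (StrongDual ℝ X)) :=
  {z | StrongDual.toWeakDual z ∈ closure (StrongDual.toWeakDual '' S)}

/-- the measure of weak non-compactness `wk_X(A)`. -/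
def wk (X : Type*) [NormedAddCommGroup X] [NormedSpace ℝ X] (A : Set X) : ℝ :=
  hdist (wstarClosure ((inclusionInDoubleDual ℝ X) '' A))
    (Set.range (inclusionInDoubleDual ℝ X))

/-- weak-star cluster points in the bidual of a sequence in `X`. -/
def wclust {X : Type*} [NormedAddCommGroup X] [NormedSpace ℝ X] (u : ℕ → X) :
    Set (StrongDual ℝ (StrongDual ℝ X)) :=
  {z | MapClusterPt (StrongDual.toWeakDual z) atTop
      (fun n => StrongDual.toWeakDual (inclusionInDoubleDual ℝ X (u n)))}

/-- the measure of weak non-compactness `wck_X(A)`. -/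
def wck (X : Type*) [NormedAddCommGroup X] [NormedSpace ℝ X] (A : Set X) : ℝ :=
  sSup {c : ℝ | ∃ u : ℕ → X, (∀ n, u n ∈ A) ∧
    c = setDist (wclust u) (Set.range (inclusionInDoubleDual ℝ X))}


/-- the canonical map `j : X → V*` for a subspace `V` of the dual,
`⟨j v, x*⟩ = x*(v)`. -/
def jfun {X : Type*} [NormedAddCommGroup X] [NormedSpace ℝ X]
    (V : Submodule ℝ (StrongDual ℝ X)) (v : X) : ↥V →L[ℝ] ℝ :=
  (inclusionInDoubleDual ℝ X v).comp V.subtypeL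

/-- the space `ℓ₁` of absolutely summable real sequences. -/
abbrev ell1 : Type := lp (fun _ : ℕ => ℝ) 1

/-- the space `c₀` of real sequences converging to zero, with the sup norm. -/
abbrev czero : Type := ZeroAtInftyContinuousMap ℕ ℝ

end

/-!
Let `Φ` lie in the unit ball of `X**`. By Goldstine's theorem `Φ` is in the weak-star closure of
the unit ball of `X`, so it lies within `wk_X(B_X) + ε` of some `v ∈ X`. The partial sums
`zₙ = ∑_{i<n} Φ(x*ᵢ) xᵢ` are `Pₙ** Φ`, hence `‖zₙ - Pₙ v‖ ≤ K ‖Φ - v‖`, and as `(Pₙ v)` is Cauchy,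
`ca((zₙ)) ≤ 2K ‖Φ - v‖`. Thus `bc₃ ≤ 2K·wk_X(B_X)`, which is at most `2K²·wk_X(B_X)` since `K ≥ 1`.
-/

section Bidual

variable {X : Type*} [NormedAddCommGroup X] [NormedSpace ℝ X]

lemma norm_le_one_of_mem_wstarClosure {z : StrongDual ℝ (StrongDual ℝ X)}
    (hz : z ∈ wstarClosure (inclusionInDoubleDual ℝ X '' closedBall 0 1)) : ‖z‖ ≤ 1 := by
  have hsub : StrongDual.toWeakDual '' (inclusionInDoubleDual ℝ X '' closedBall 0 1) ⊆
      WeakDual.toStrongDual ⁻¹' closedBall 0 1 := by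
    rintro _ ⟨_, ⟨v, hv, rfl⟩, rfl⟩
    exact (mem_closedBall_zero_iff (E := StrongDual ℝ (StrongDual ℝ X))).2
      ((double_dual_bound ℝ X v).trans (mem_closedBall_zero_iff.1 hv))
  exact (mem_closedBall_zero_iff (E := StrongDual ℝ (StrongDual ℝ X))).1
    (closure_minimal hsub (WeakDual.isClosed_closedBall 0 1) hz)

lemma mem_wstarClosure_of_norm_le_one {Φ : StrongDual ℝ (StrongDual ℝ X)} (hΦ : ‖Φ‖ ≤ 1) :
    Φ ∈ wstarClosure (inclusionInDoubleDual ℝ X '' closedBall 0 1) := by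
  by_contra hΦS
  set S := StrongDual.toWeakDual '' (inclusionInDoubleDual ℝ X '' closedBall (0 : X) 1)
  have hconv : Convex ℝ (closure S) :=
    (((convex_closedBall (0 : X) 1).linear_image (inclusionInDoubleDual ℝ X).toLinearMap
      ).linear_image (StrongDual.toWeakDual : _ ≃ₗ[ℝ] WeakDual ℝ _).toLinearMap).closure
  have : LocallyConvexSpace ℝ (WeakDual ℝ (StrongDual ℝ X)) := by
    exact WeakBilin.locallyConvexSpace (E := StrongDual ℝ (StrongDual ℝ X))
      (B := topDualPairing ℝ (StrongDual ℝ X))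
  obtain ⟨F, u, hFS, huΦ⟩ := geometric_hahn_banach_closed_point hconv isClosed_closure hΦS
  -- weak-star continuous functionals on the bidual are evaluations at points of the dual
  obtain ⟨h, rfl⟩ : ∃ h, WeakBilin.eval (topDualPairing ℝ (StrongDual ℝ X)) h = F :=
    LinearMap.dualEmbedding_surjective _ F
  have hball : ∀ v : X, ‖v‖ ≤ 1 → h v < u := fun v hv =>
    hFS _ (subset_closure ⟨_, ⟨v, mem_closedBall_zero_iff.2 hv, rfl⟩, rfl⟩)
  have hu : 0 < u := by simpa using hball 0 (by simp)
  have hnorm : ‖h‖ ≤ u := by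
    refine h.opNorm_le_of_unit_norm hu.le fun v hv => abs_le.2 ⟨?_, (hball v hv.le).le⟩
    have hneg := hball (-v) (by rw [norm_neg, hv])
    rw [map_neg] at hneg
    linarith
  have : Φ h ≤ u :=
    calc Φ h ≤ ‖Φ‖ * ‖h‖ := (le_abs_self _).trans (Φ.le_opNorm h)
      _ ≤ 1 * u := mul_le_mul hΦ hnorm (norm_nonneg h) zero_le_one
      _ = u := one_mul u
  exact absurd huΦ (not_lt.2 this)

lemma infDist_le_wk_closedBall {Φ : StrongDual ℝ (StrongDual ℝ X)} (hΦ : ‖Φ‖ ≤ 1) :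
    infDist Φ (range (inclusionInDoubleDual ℝ X)) ≤ wk X (closedBall 0 1) := by
  refine le_csSup ⟨1, ?_⟩ ⟨Φ, mem_wstarClosure_of_norm_le_one hΦ, rfl⟩
  rintro _ ⟨z, hz, rfl⟩
  calc infDist z (range (inclusionInDoubleDual ℝ X))
      ≤ dist z (inclusionInDoubleDual ℝ X 0) := infDist_le_dist_of_mem ⟨0, rfl⟩
    _ = ‖z‖ := by rw [map_zero]; exact dist_zero_right z
    _ ≤ 1 := norm_le_one_of_mem_wstarClosure hz

lemma wk_nonneg (A : Set X) : 0 ≤ wk X A :=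
  Real.sSup_nonneg fun _ ⟨_, _, hd⟩ => hd ▸ infDist_nonneg

end Bidual

section ca

variable {E : Type*} [NormedAddCommGroup E]

lemma ca_le_of_forall_norm_sub_le {z : ℕ → E} {b : ℝ} (N : ℕ)
    (h : ∀ k l, N ≤ k → N ≤ l → ‖z k - z l‖ ≤ b) : ca z ≤ b := by
  have hbdd : BddBelow (range fun n => sSup {d : ℝ | ∃ k, n ≤ k ∧ ∃ l, n ≤ l ∧ d = ‖z k - z l‖}) :=
    ⟨0, forall_mem_range.2 fun _ => Real.sSup_nonneg fun _ ⟨_, _, _, _, hd⟩ => hd ▸ norm_nonneg _⟩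
  refine (ciInf_le hbdd N).trans (csSup_le ⟨_, N, le_rfl, N, le_rfl, rfl⟩ ?_)
  rintro _ ⟨k, hk, l, hl, rfl⟩
  exact h k l hk hl

lemma ca_le_two_mul_of_cauchySeq {z y : ℕ → E} (hy : CauchySeq y) {C : ℝ}
    (hzy : ∀ n, ‖z n - y n‖ ≤ C) : ca z ≤ 2 * C := by
  refine le_of_forall_pos_le_add fun ε hε => ?_
  obtain ⟨N, hN⟩ := Metric.cauchySeq_iff.1 hy ε hε
  refine ca_le_of_forall_norm_sub_le N fun k l hk hl => ?_
  have hykl : ‖y k - y l‖ < ε := by simpa only [dist_eq_norm] using hN k hk l hl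
  calc ‖z k - z l‖ = ‖(z k - y k) + (y k - y l) - (z l - y l)‖ := by congr 1; abel
    _ ≤ ‖z k - y k‖ + ‖y k - y l‖ + ‖z l - y l‖ := norm_sub_le_of_le (norm_add_le _ _) le_rfl
    _ ≤ 2 * C + ε := by linarith [hzy k, hzy l]

end ca

section SchauderBasis

variable {X : Type*} [NormedAddCommGroup X] [NormedSpace ℝ X] {x : ℕ → X} {f : ℕ → X →L[ℝ] ℝ}

lemma basisProj_apply (x : ℕ → X) (f : ℕ → X →L[ℝ] ℝ) (n : ℕ) (v : X) :
    basisProj x f n v = ∑ i ∈ Finset.range n, f i v • x i := by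
  simp [basisProj]

lemma comp_basisProj (x : ℕ → X) (f : ℕ → X →L[ℝ] ℝ) (n : ℕ) (h : StrongDual ℝ X) :
    h.comp (basisProj x f n) = ∑ i ∈ Finset.range n, h (x i) • f i := by
  ext v
  simp [basisProj_apply, mul_comm]

lemma norm_sum_smul_sub_basisProj_le (x : ℕ → X) (f : ℕ → X →L[ℝ] ℝ) (n : ℕ)
    (Φ : StrongDual ℝ (StrongDual ℝ X)) (v : X) :
    ‖∑ i ∈ Finset.range n, Φ (f i) • x i - basisProj x f n v‖ ≤
      ‖basisProj x f n‖ * ‖Φ - inclusionInDoubleDual ℝ X v‖ := by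
  refine norm_le_dual_bound ℝ _ (by positivity) fun h => ?_
  have hh : h (∑ i ∈ Finset.range n, Φ (f i) • x i - basisProj x f n v) =
      (Φ - inclusionInDoubleDual ℝ X v) (h.comp (basisProj x f n)) := by
    rw [sub_apply, dual_def, ContinuousLinearMap.comp_apply, map_sub, comp_basisProj]
    simp [mul_comm]
  calc ‖h (∑ i ∈ Finset.range n, Φ (f i) • x i - basisProj x f n v)‖
      ≤ ‖Φ - inclusionInDoubleDual ℝ X v‖ * (‖h‖ * ‖basisProj x f n‖) := by
        rw [hh]
        exact ((Φ - _).le_opNorm _).trans (by gcongr; exact h.opNorm_comp_le _)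
    _ = ‖basisProj x f n‖ * ‖Φ - inclusionInDoubleDual ℝ X v‖ * ‖h‖ := by ring

namespace IsSchauderBasis

lemma tendsto_basisProj (hb : IsSchauderBasis x f) (v : X) :
    Tendsto (fun n => basisProj x f n v) atTop (𝓝 v) := by
  simpa only [basisProj_apply] using hb.expand v

lemma bddAbove_norm_basisProj [CompleteSpace X] (hb : IsSchauderBasis x f) :
    BddAbove (range fun n => ‖basisProj x f n‖) := by
  obtain ⟨C, hC⟩ := banach_steinhaus fun v => (hb.tendsto_basisProj v).norm.bddAbove_range.imp
    fun _ hC n => hC ⟨n, rfl⟩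
  exact ⟨C, forall_mem_range.2 hC⟩

lemma apply_self (hb : IsSchauderBasis x f) (i : ℕ) : f i (x i) = 1 := by
  have hx : Tendsto (fun n => ∑ j ∈ Finset.range n, (Pi.single i 1 : ℕ → ℝ) j • x j) atTop
      (𝓝 (x i)) := by
    refine tendsto_atTop_of_eventually_const (i₀ := i + 1) fun n hn => ?_
    rw [Finset.sum_eq_single_of_mem i (Finset.mem_range.2 hn) fun j _ hji => by simp [hji]]
    simp
  simpa using (hb.unique _ _ hx i).symm

lemma one_le_of_norm_basisProj_le (hb : IsSchauderBasis x f) {K : ℝ}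
    (hK : ∀ n, ‖basisProj x f n‖ ≤ K) : 1 ≤ K := by
  have hx0 : 0 < ‖x 0‖ := norm_pos_iff.2 fun h => by simpa [h] using hb.apply_self 0
  have : ‖x 0‖ ≤ K * ‖x 0‖ := le_of_tendsto' (hb.tendsto_basisProj (x 0)).norm fun n =>
    (basisProj x f n).le_of_opNorm_le (hK n) _
  nlinarith

lemma ca_sum_le_two_mul_infDist (hb : IsSchauderBasis x f) {K : ℝ}
    (hK : ∀ n, ‖basisProj x f n‖ ≤ K) (Φ : StrongDual ℝ (StrongDual ℝ X)) :
    ca (fun n => ∑ i ∈ Finset.range n, Φ (f i) • x i) ≤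
      2 * K * infDist Φ (range (inclusionInDoubleDual ℝ X)) := by
  have hK0 : 0 ≤ K := (norm_nonneg _).trans (hK 0)
  have : Nonempty (range (inclusionInDoubleDual ℝ X)) := ⟨⟨_, 0, rfl⟩⟩
  rw [infDist_eq_iInf, Real.mul_iInf_of_nonneg (by positivity)]
  refine le_ciInf ?_
  rintro ⟨_, v, rfl⟩
  calc ca (fun n => ∑ i ∈ Finset.range n, Φ (f i) • x i)
      ≤ 2 * (K * ‖Φ - inclusionInDoubleDual ℝ X v‖) :=
        ca_le_two_mul_of_cauchySeq (hb.tendsto_basisProj v).cauchySeq fun n =>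
          (norm_sum_smul_sub_basisProj_le x f n Φ v).trans (by gcongr; exact hK n)
    _ = 2 * K * dist Φ (inclusionInDoubleDual ℝ X v) := by
        rw [mul_assoc, dist_eq_norm (E := StrongDual ℝ (StrongDual ℝ X))]

end IsSchauderBasis

end SchauderBasis

theorem bc3_le_wk_general {X : Type*} [NormedAddCommGroup X] [NormedSpace ℝ X]
    [CompleteSpace X]
    (x : ℕ → X) (f : ℕ → X →L[ℝ] ℝ) (hb : IsSchauderBasis x f)
    (K : ℝ) (hK : K = ⨆ n : ℕ, ‖basisProj x f n‖) :
    bc3 x f ≤ 2 * K ^ 2 * wk X (Metric.closedBall (0 : X) 1) := by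
  have hPK : ∀ n, ‖basisProj x f n‖ ≤ K := fun n => hK ▸ le_ciSup hb.bddAbove_norm_basisProj n
  have hK1 : 1 ≤ K := hb.one_le_of_norm_basisProj_le hPK
  have hw := wk_nonneg (closedBall (0 : X) 1)
  refine Real.sSup_le ?_ (by positivity)
  rintro _ ⟨Φ, hΦ, rfl⟩
  calc ca (fun n => ∑ i ∈ Finset.range n, Φ (f i) • x i)
      ≤ 2 * K * infDist Φ (range (inclusionInDoubleDual ℝ X)) :=
        hb.ca_sum_le_two_mul_infDist hPK Φ
    _ ≤ 2 * K * wk X (closedBall 0 1) := by gcongr; exact infDist_le_wk_closedBall hΦ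
    _ ≤ 2 * K ^ 2 * wk X (closedBall 0 1) := by
        gcongr; exact le_self_pow₀ hK1 two_ne_zero

/-- Theorem 5.1(1): `bc₃((xₙ)) ≤ 2K²·wk_X(B_X)`. -/
theorem bc3_le_wk {X : Type*} [NormedAddCommGroup X] [NormedSpace ℝ X]
    [CompleteSpace X] (hinf : ¬ FiniteDimensional ℝ X)
    (x : ℕ → X) (f : ℕ → X →L[ℝ] ℝ) (hb : IsSchauderBasis x f)
    (K : ℝ) (hK : K = ⨆ n : ℕ, ‖basisProj x f n‖) :
    bc3 x f ≤ 2 * K ^ 2 * wk X (Metric.closedBall (0 : X) 1) :=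
  bc3_le_wk_general x f hb K hK
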